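/- arXiv:2009.12029 — 6 statements merged into one kernel-verified Lean document; each statement's English description precedes it below -/
import Mathlib

section
/- Let n ≥ 1, let α ∈ (0,1], and let W be a column-stochastic n×n real matrix that has at least one row r with W_{r,i} ≥ α for every column index i. Then for every x ∈ ℝⁿ and y defined by yᵀ = xᵀ W (i.e., y_i = Σ_j x_j W_{j,i}), one has osc(y) ≤ (1 − α)·osc(x). -/
/-!
Each `y i` is a convex combination of the `x j` giving weight at least `α` to `x r`, so it lies in
`[m + α (x r - m), M - α (M - x r)]`, where `M` and `m` are the maximum and minimum of `x`.
This interval has length `(1 - α) (M - m)`.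
-/

open Finset

/-- The oscillation of a vector: `osc(x) = max_i x_i − min_i x_i`. -/
noncomputable def osc {n : ℕ} (x : Fin n → ℝ) : ℝ := (⨆ i, x i) - (⨅ i, x i)

section WeightedAverage

variable {ι : Type*} [Fintype ι] {w x : ι → ℝ} {α : ℝ}

theorem sum_mul_le_sub_mul_of_le_weight {M : ℝ} (hw : ∀ j, 0 ≤ w j) (hw1 : ∑ j, w j = 1)
    (hx : ∀ j, x j ≤ M) (r : ι) (hr : α ≤ w r) :
    ∑ j, x j * w j ≤ M - α * (M - x r) := by
  have hgap : α * (M - x r) ≤ ∑ j, (M - x j) * w j :=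
    calc α * (M - x r) ≤ (M - x r) * w r := by nlinarith [hx r]
      _ ≤ ∑ j, (M - x j) * w j :=
        single_le_sum (fun j _ => mul_nonneg (sub_nonneg.2 (hx j)) (hw j)) (mem_univ r)
  have hsum : ∑ j, (M - x j) * w j = M - ∑ j, x j * w j := by
    simp only [sub_mul, sum_sub_distrib, ← mul_sum, hw1, mul_one]
  linarith

theorem add_mul_le_sum_mul_of_le_weight {m : ℝ} (hw : ∀ j, 0 ≤ w j) (hw1 : ∑ j, w j = 1)
    (hx : ∀ j, m ≤ x j) (r : ι) (hr : α ≤ w r) :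
    m + α * (x r - m) ≤ ∑ j, x j * w j := by
  have := sum_mul_le_sub_mul_of_le_weight (x := -x) (M := -m) hw hw1 (fun j => neg_le_neg (hx j))
    r hr
  simp only [Pi.neg_apply, neg_mul, sum_neg_distrib] at this
  linarith

end WeightedAverage

section Oscillation

variable {n : ℕ}

theorem le_iSup_fin (x : Fin n → ℝ) (i : Fin n) : x i ≤ ⨆ j, x j :=
  le_ciSup (Set.finite_range x).bddAbove i

theorem iInf_le_fin (x : Fin n → ℝ) (i : Fin n) : ⨅ j, x j ≤ x i :=
  ciInf_le (Set.finite_range x).bddBelow i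

theorem osc_le_of_forall_mem_Icc [Nonempty (Fin n)] {x : Fin n → ℝ} {a b : ℝ}
    (h : ∀ i, x i ∈ Set.Icc a b) : osc x ≤ b - a :=
  sub_le_sub (ciSup_le fun i => (h i).2) (le_ciInf fun i => (h i).1)

end Oscillation

theorem stmt_2_general (n : ℕ) (α : ℝ)
    (W : Matrix (Fin n) (Fin n) ℝ)
    (hnonneg : ∀ j i, 0 ≤ W j i) (hcol : ∀ i, ∑ j, W j i = 1)
    (r : Fin n) (hrow : ∀ i, α ≤ W r i)
    (x y : Fin n → ℝ) (hy : ∀ i, y i = ∑ j, x j * W j i) :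
    osc y ≤ (1 - α) * osc x := by
  have : Nonempty (Fin n) := ⟨r⟩
  set M := ⨆ j, x j
  set m := ⨅ j, x j
  have hy_mem : ∀ i, y i ∈ Set.Icc (m + α * (x r - m)) (M - α * (M - x r)) := fun i =>
    hy i ▸ ⟨add_mul_le_sum_mul_of_le_weight (hnonneg · i) (hcol i) (iInf_le_fin x) r (hrow i),
      sum_mul_le_sub_mul_of_le_weight (hnonneg · i) (hcol i) (le_iSup_fin x) r (hrow i)⟩
  calc osc y ≤ (M - α * (M - x r)) - (m + α * (x r - m)) := osc_le_of_forall_mem_Icc hy_mem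
    _ = (1 - α) * osc x := by rw [osc]; ring

/-- If a column-stochastic matrix `W` has a row `r` with all entries at least `α`,
then `yᵀ = xᵀ W` satisfies `osc(y) ≤ (1 − α)·osc(x)`. -/
theorem stmt_2 (n : ℕ) (hn : 1 ≤ n) (α : ℝ) (hα : α ∈ Set.Ioc (0 : ℝ) 1)
    (W : Matrix (Fin n) (Fin n) ℝ)
    (hnonneg : ∀ j i, 0 ≤ W j i) (hcol : ∀ i, ∑ j, W j i = 1)
    (r : Fin n) (hrow : ∀ i, α ≤ W r i)
    (x y : Fin n → ℝ) (hy : ∀ i, y i = ∑ j, x j * W j i) :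
    osc y ≤ (1 - α) * osc x :=
  stmt_2_general n α W hnonneg hcol r hrow x y hy
end

section
/- Let n ≥ 1 and m ≥ 1, and for each t ∈ {1,…,m} let W_t be a column-stochastic n×n real matrix having at least one row r_t with (W_t)_{r_t,i} ≥ α_t for every column index i, where α_t ∈ (0,1]. Set T = W_m · W_{m−1} ⋯ W_1. Then for every x ∈ ℝⁿ and y defined by yᵀ = xᵀ T, one has osc(y) ≤ (∏_{t=1}^m (1 − α_t))·osc(x). -/
/-!
If every entry of row `r` of a column-stochastic `W` is at least `a`, then subtracting `a` at
row `r` from each column leaves nonnegative weights of total mass `1 - a`. Hence every entry of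
`xᵀ W` lies between `a x_r + (1 - a) min x` and `a x_r + (1 - a) max x`, so one factor shrinks the
oscillation by `1 - a`, and the product `W_m ⋯ W_1` by `∏ (1 - α_t)`.
-/

open Finset

open Matrix

lemma sum_mul_le_sum_mul_iSup {ι : Type*} [Fintype ι] {w : ι → ℝ} (hw : ∀ j, 0 ≤ w j)
    (x : ι → ℝ) :
    ∑ j, w j * x j ≤ (∑ j, w j) * ⨆ i, x i := by
  rw [sum_mul]
  exact sum_le_sum fun j _ =>
    mul_le_mul_of_nonneg_left (le_ciSup (Finite.bddAbove_range x) j) (hw j)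

lemma sum_mul_iInf_le_sum_mul {ι : Type*} [Fintype ι] {w : ι → ℝ} (hw : ∀ j, 0 ≤ w j)
    (x : ι → ℝ) :
    (∑ j, w j) * (⨅ i, x i) ≤ ∑ j, w j * x j := by
  rw [sum_mul]
  exact sum_le_sum fun j _ =>
    mul_le_mul_of_nonneg_left (ciInf_le (Finite.bddBelow_range x) j) (hw j)

lemma vecMul_apply_sub_eq_sum {ι : Type*} [Fintype ι] [DecidableEq ι] (W : Matrix ι ι ℝ)
    (x : ι → ℝ) (r i : ι) (a : ℝ) :
    (x ᵥ* W) i - a * x r = ∑ j, (W j i - (Pi.single r a : ι → ℝ) j) * x j := by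
  simp [vecMul, dotProduct, mul_comm (x _), sub_mul, sum_sub_distrib, Pi.single_apply]

section ColumnMinorization

variable {ι : Type*} [Fintype ι] [DecidableEq ι] {W : Matrix ι ι ℝ} {a : ℝ} {r : ι}

lemma sub_single_nonneg_of_mem_colStochastic (hW : W ∈ colStochastic ℝ ι)
    (hr : ∀ i, a ≤ W r i) (i j : ι) : 0 ≤ W j i - (Pi.single r a : ι → ℝ) j := by
  rcases eq_or_ne j r with rfl | hj
  · simpa using hr i
  · simpa [hj] using nonneg_of_mem_colStochastic hW

lemma sum_sub_single_of_mem_colStochastic (hW : W ∈ colStochastic ℝ ι) (i : ι) :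
    ∑ j, (W j i - (Pi.single r a : ι → ℝ) j) = 1 - a := by
  rw [sum_sub_distrib, sum_col_of_mem_colStochastic hW i, sum_pi_single']
  simp

lemma vecMul_apply_le (hW : W ∈ colStochastic ℝ ι) (hr : ∀ i, a ≤ W r i)
    (x : ι → ℝ) (i : ι) :
    (x ᵥ* W) i ≤ a * x r + (1 - a) * ⨆ j, x j := by
  have := sum_mul_le_sum_mul_iSup (sub_single_nonneg_of_mem_colStochastic hW hr i) x
  rw [sum_sub_single_of_mem_colStochastic hW, ← vecMul_apply_sub_eq_sum] at this
  linarith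

lemma le_vecMul_apply (hW : W ∈ colStochastic ℝ ι) (hr : ∀ i, a ≤ W r i)
    (x : ι → ℝ) (i : ι) :
    a * x r + (1 - a) * (⨅ j, x j) ≤ (x ᵥ* W) i := by
  have := sum_mul_iInf_le_sum_mul (sub_single_nonneg_of_mem_colStochastic hW hr i) x
  rw [sum_sub_single_of_mem_colStochastic hW, ← vecMul_apply_sub_eq_sum] at this
  linarith

end ColumnMinorization

lemma osc_vecMul_le {n : ℕ} {W : Matrix (Fin n) (Fin n) ℝ} {a : ℝ} {r : Fin n}
    (hW : W ∈ colStochastic ℝ (Fin n)) (hr : ∀ i, a ≤ W r i)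
    (x : Fin n → ℝ) : osc (x ᵥ* W) ≤ (1 - a) * osc x := by
  have : Nonempty (Fin n) := ⟨r⟩
  have hsup := ciSup_le (vecMul_apply_le hW hr x)
  have hinf := le_ciInf (le_vecMul_apply hW hr x)
  unfold osc
  linarith

theorem osc_vecMul_prod_le {m n : ℕ} (W : Fin m → Matrix (Fin n) (Fin n) ℝ) (α : Fin m → ℝ)
    (hW : ∀ t, W t ∈ colStochastic ℝ (Fin n)) (hrow : ∀ t, ∃ r, ∀ i, α t ≤ W t r i)
    (x : Fin n → ℝ) :
    osc (x ᵥ* ((List.ofFn W).reverse).prod) ≤ (∏ t, (1 - α t)) * osc x := by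
  induction m with
  | zero => simp
  | succ m ih =>
    obtain ⟨r, hr⟩ := hrow 0
    have hα : α 0 ≤ 1 := (hr r).trans (le_one_of_mem_colStochastic (hW 0))
    rw [List.ofFn_succ, List.reverse_cons, List.prod_append, List.prod_singleton,
      ← vecMul_vecMul, Fin.prod_univ_succ, mul_assoc]
    calc osc ((x ᵥ* (List.ofFn fun t => W t.succ).reverse.prod) ᵥ* W 0)
        ≤ (1 - α 0) * osc (x ᵥ* (List.ofFn fun t => W t.succ).reverse.prod) :=
          osc_vecMul_le (hW 0) hr _
      _ ≤ (1 - α 0) * ((∏ t : Fin m, (1 - α t.succ)) * osc x) :=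
          mul_le_mul_of_nonneg_left (ih _ _ (fun _ => hW _) (fun _ => hrow _))
            (sub_nonneg.2 hα)

theorem stmt_3_general (n m : ℕ)
    (W : Fin m → Matrix (Fin n) (Fin n) ℝ) (α : Fin m → ℝ)
    (hnonneg : ∀ t j i, 0 ≤ W t j i) (hcol : ∀ t i, ∑ j, W t j i = 1)
    (hrow : ∀ t, ∃ r, ∀ i, α t ≤ W t r i)
    (T : Matrix (Fin n) (Fin n) ℝ) (hT : T = ((List.ofFn W).reverse).prod)
    (x y : Fin n → ℝ) (hy : ∀ i, y i = ∑ j, x j * T j i) :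
    osc y ≤ (∏ t, (1 - α t)) * osc x := by
  obtain rfl : y = x ᵥ* T := funext hy
  subst hT
  exact osc_vecMul_prod_le W α (fun t => mem_colStochastic_iff_sum.2 ⟨hnonneg t, hcol t⟩) hrow x

/-- For a product `T = W_m ⋯ W_1` of column-stochastic matrices, each of which has
some row bounded below by `α_t` in every column, `yᵀ = xᵀ T` satisfies
`osc(y) ≤ (∏_t (1 − α_t))·osc(x)`. -/
theorem stmt_3 (n m : ℕ) (hn : 1 ≤ n) (hm : 1 ≤ m)
    (W : Fin m → Matrix (Fin n) (Fin n) ℝ) (α : Fin m → ℝ)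
    (hα : ∀ t, α t ∈ Set.Ioc (0 : ℝ) 1)
    (hnonneg : ∀ t j i, 0 ≤ W t j i) (hcol : ∀ t i, ∑ j, W t j i = 1)
    (hrow : ∀ t, ∃ r, ∀ i, α t ≤ W t r i)
    (T : Matrix (Fin n) (Fin n) ℝ) (hT : T = ((List.ofFn W).reverse).prod)
    (x y : Fin n → ℝ) (hy : ∀ i, y i = ∑ j, x j * T j i) :
    osc y ≤ (∏ t, (1 - α t)) * osc x :=
  stmt_3_general n m W α hnonneg hcol hrow T hT x y hy
end

section
/- Let n ≥ 2, N ≥ 1, α ∈ (0,1], and let (A_k)_{k≥1} be a sequence of column-stochastic n×n real matrices such that for every t ≥ 1 the block product W_t = A_{Nt} · A_{Nt−1} ⋯ A_{N(t−1)+1} has at least one row whose entries are all ≥ α. Let T_k = A_k · A_{k−1} ⋯ A_1. Then for every k ≥ 1 the coefficient of ergodicity satisfies δ(T_k) ≤ (1 − α)^{⌊k/N⌋}; in particular, if α < 1 then δ(T_k) → 0 as k → ∞, and if α = 1 then δ(T_k) = 0 for all k ≥ N. -/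
open Finset Filter Topology

/-- The coefficient of ergodicity of a matrix:
`δ(T) = max_j max_{i1,i2} |T_{j,i1} − T_{j,i2}|`. -/
noncomputable def ergCoeff {n : ℕ} (T : Matrix (Fin n) (Fin n) ℝ) : ℝ :=
  ⨆ j, ⨆ i1, ⨆ i2, |T j i1 - T j i2|

/-!
Column-stochastic matrices do not increase the ℓ¹-norm, and on zero-sum vectors one whose row `r`
is bounded below by `α` contracts it by `1 - α`: subtracting `α` from row `r` gives a nonnegative
matrix with column sums `1 - α` that acts in the same way on zero-sum vectors. The difference of
columns `i₁, i₂` of `T_k` is `T_k (e_{i₁} - e_{i₂})`, a zero-sum vector which therefore has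
ℓ¹-norm at most `2 (1 - α)^⌊k/N⌋`, and an entry of a zero-sum vector is at most half its ℓ¹-norm.
-/

open Matrix

section L1Norm

variable {ι κ : Type*} [Fintype ι] [Fintype κ]

theorem sum_abs_mulVec_le_of_nonneg {Q : Matrix κ ι ℝ} {c : ℝ} (hQ : ∀ i j, 0 ≤ Q i j)
    (hc : ∀ j, ∑ i, Q i j = c) (u : ι → ℝ) :
    ∑ i, |(Q *ᵥ u) i| ≤ c * ∑ j, |u j| :=
  calc ∑ i, |(Q *ᵥ u) i| ≤ ∑ i, ∑ j, Q i j * |u j| := by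
        gcongr with i
        refine (abs_sum_le_sum_abs _ _).trans_eq ?_
        simp [abs_mul, abs_of_nonneg (hQ _ _)]
    _ = c * ∑ j, |u j| := by rw [sum_comm, mul_sum]; simp [← sum_mul, hc]

variable [DecidableEq ι]

theorem sum_abs_mulVec_le_of_mem_colStochastic {P : Matrix ι ι ℝ} (hP : P ∈ colStochastic ℝ ι)
    (u : ι → ℝ) : ∑ i, |(P *ᵥ u) i| ≤ ∑ i, |u i| := by
  simpa using sum_abs_mulVec_le_of_nonneg (fun _ _ => nonneg_of_mem_colStochastic hP)
    (sum_col_of_mem_colStochastic hP) u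

theorem sum_abs_mulVec_le_of_row_ge {P : Matrix ι ι ℝ} (hP : P ∈ colStochastic ℝ ι) {α : ℝ}
    {r : ι} (hr : ∀ i, α ≤ P r i) {u : ι → ℝ} (hu : ∑ i, u i = 0) :
    ∑ i, |(P *ᵥ u) i| ≤ (1 - α) * ∑ i, |u i| := by
  set Q : Matrix ι ι ℝ := P - of fun i _ => if i = r then α else 0
  have hQu : Q *ᵥ u = P *ᵥ u := by
    ext i
    simp [Q, mulVec, dotProduct, sub_mul, sum_sub_distrib, ← mul_sum, hu]
  rw [← hQu]
  refine sum_abs_mulVec_le_of_nonneg (fun i j => ?_) (fun j => ?_) u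
  · by_cases h : i = r
    · subst h; simpa [Q] using hr j
    · simpa [Q, h] using nonneg_of_mem_colStochastic hP
  · simp [Q, sum_sub_distrib, sum_col_of_mem_colStochastic hP]

end L1Norm

theorem two_mul_abs_le_sum_abs_of_sum_eq_zero {ι : Type*} [Fintype ι] {u : ι → ℝ}
    (hu : ∑ i, u i = 0) (j : ι) : 2 * |u j| ≤ ∑ i, |u i| := by
  classical
  have hrest : |u j| ≤ ∑ i ∈ univ.erase j, |u i| := by
    rw [← add_sum_erase _ _ (mem_univ j), add_eq_zero_iff_eq_neg] at hu
    rw [hu, abs_neg]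
    exact abs_sum_le_sum_abs _ _
  rw [← add_sum_erase _ _ (mem_univ j)]
  linarith

theorem List.prod_map_range_sub_add {M : Type*} [Monoid M] (A : ℕ → M) (m k : ℕ) :
    ((List.range (m + k)).map fun s => A (m + k - s)).prod =
      ((List.range m).map fun s => A (m + k - s)).prod *
        ((List.range k).map fun s => A (k - s)).prod := by
  rw [List.range_add, List.map_append, List.prod_append, List.map_map]
  congr 3
  funext s
  simp only [Function.comp_apply]
  congr 1
  omega

theorem sum_abs_sub_le_two_of_mem_colStochastic {ι : Type*} [Fintype ι] [DecidableEq ι]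
    {P : Matrix ι ι ℝ} (hP : P ∈ colStochastic ℝ ι) (i₁ i₂ : ι) :
    ∑ j, |P j i₁ - P j i₂| ≤ 2 :=
  calc ∑ j, |P j i₁ - P j i₂| ≤ ∑ j, (P j i₁ + P j i₂) := by
        gcongr with j
        exact abs_sub_le_of_nonneg_of_le (nonneg_of_mem_colStochastic hP)
          (le_add_of_nonneg_right (nonneg_of_mem_colStochastic hP))
          (nonneg_of_mem_colStochastic hP) (le_add_of_nonneg_left (nonneg_of_mem_colStochastic hP))
    _ = 2 := by
        rw [sum_add_distrib, sum_col_of_mem_colStochastic hP, sum_col_of_mem_colStochastic hP]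
        norm_num

theorem sum_abs_le_pow_of_blocks {ι : Type*} [Fintype ι] [DecidableEq ι] {N : ℕ} {α : ℝ}
    (hα : α ≤ 1) {A W : ℕ → Matrix ι ι ℝ} (hA : ∀ k, A (k + 1) ∈ colStochastic ℝ ι)
    (hW : ∀ t, W (t + 1) ∈ colStochastic ℝ ι) (hrow : ∀ t, ∃ r, ∀ i, α ≤ W (t + 1) r i)
    {v : ℕ → ι → ℝ} (hvA : ∀ k, v (k + 1) = A (k + 1) *ᵥ v k)
    (hvW : ∀ t, v (N * (t + 1)) = W (t + 1) *ᵥ v (N * t)) (hv₀ : ∑ i, v 0 i = 0) (k : ℕ) :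
    ∑ i, |v k i| ≤ (1 - α) ^ (k / N) * ∑ i, |v 0 i| := by
  have hsum (k : ℕ) : ∑ i, v k i = 0 := by
    induction k with
    | zero => exact hv₀
    | succ k ih => rw [hvA, sum_mulVec_of_mem_colStochastic (hA k), ih]
  have hanti : Antitone fun k => ∑ i, |v k i| := antitone_nat_of_succ_le fun k => by
    simpa only [hvA] using sum_abs_mulVec_le_of_mem_colStochastic (hA k) (v k)
  have hblock (t : ℕ) : ∑ i, |v (N * t) i| ≤ (1 - α) ^ t * ∑ i, |v 0 i| := by
    induction t with
    | zero => simp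
    | succ t ih =>
      obtain ⟨r, hr⟩ := hrow t
      calc ∑ i, |v (N * (t + 1)) i| ≤ (1 - α) * ∑ i, |v (N * t) i| := by
            rw [hvW]; exact sum_abs_mulVec_le_of_row_ge (hW t) hr (hsum _)
        _ ≤ (1 - α) * ((1 - α) ^ t * ∑ i, |v 0 i|) := by gcongr
        _ = (1 - α) ^ (t + 1) * ∑ i, |v 0 i| := by ring
  exact (hanti (Nat.mul_div_le k N)).trans (hblock _)

theorem abs_sub_le_pow_of_blocks {ι : Type*} [Fintype ι] [DecidableEq ι] {N : ℕ} {α : ℝ}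
    (hα : α ≤ 1) {A W T : ℕ → Matrix ι ι ℝ} (hA : ∀ k, A (k + 1) ∈ colStochastic ℝ ι)
    (hW : ∀ t, W (t + 1) ∈ colStochastic ℝ ι) (hrow : ∀ t, ∃ r, ∀ i, α ≤ W (t + 1) r i)
    (hT₀ : T 0 ∈ colStochastic ℝ ι) (hTA : ∀ k, T (k + 1) = A (k + 1) * T k)
    (hTW : ∀ t, T (N * (t + 1)) = W (t + 1) * T (N * t)) (k : ℕ) (j i₁ i₂ : ι) :
    |T k j i₁ - T k j i₂| ≤ (1 - α) ^ (k / N) := by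
  have hT (k : ℕ) : T k ∈ colStochastic ℝ ι := by
    induction k with
    | zero => exact hT₀
    | succ k ih => rw [hTA]; exact mul_mem (hA k) ih
  set v : ℕ → ι → ℝ := fun k => T k *ᵥ (Pi.single i₁ 1 - Pi.single i₂ 1)
  have hv (k : ℕ) (j : ι) : v k j = T k j i₁ - T k j i₂ := by simp [v, mulVec_sub]
  have hsum (k : ℕ) : ∑ j, v k j = 0 := by
    simp only [hv, sum_sub_distrib, sum_col_of_mem_colStochastic (hT k), sub_self]
  have hdecay := sum_abs_le_pow_of_blocks hα hA hW hrow (N := N) (v := v)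
    (fun k => by simp only [v, hTA, ← mulVec_mulVec])
    (fun t => by simp only [v, hTW, ← mulVec_mulVec]) (hsum 0) k
  have hv₀ : ∑ j, |v 0 j| ≤ 2 := by
    simpa only [hv] using sum_abs_sub_le_two_of_mem_colStochastic hT₀ i₁ i₂
  have hpow : 0 ≤ (1 - α) ^ (k / N) := pow_nonneg (by linarith) _
  have hhalf := two_mul_abs_le_sum_abs_of_sum_eq_zero (hsum k) j
  rw [← hv]
  linarith [mul_le_mul_of_nonneg_left hv₀ hpow]

theorem ergCoeff_le {n : ℕ} {T : Matrix (Fin n) (Fin n) ℝ} {c : ℝ} (hc : 0 ≤ c)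
    (h : ∀ j i₁ i₂, |T j i₁ - T j i₂| ≤ c) : ergCoeff T ≤ c :=
  Real.iSup_le (fun j => Real.iSup_le (fun i₁ => Real.iSup_le (h j i₁) hc) hc) hc

theorem ergCoeff_nonneg {n : ℕ} (T : Matrix (Fin n) (Fin n) ℝ) : 0 ≤ ergCoeff T :=
  Real.iSup_nonneg fun _ => Real.iSup_nonneg fun _ => Real.iSup_nonneg fun _ => abs_nonneg _

theorem stmt_5_general (n N : ℕ) (hN : 1 ≤ N)
    (α : ℝ) (hα : α ∈ Set.Ioc (0 : ℝ) 1)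
    (A : ℕ → Matrix (Fin n) (Fin n) ℝ)
    (hnonneg : ∀ k, 1 ≤ k → ∀ i j, 0 ≤ A k i j)
    (hcol : ∀ k, 1 ≤ k → ∀ j, ∑ i, A k i j = 1)
    (W : ℕ → Matrix (Fin n) (Fin n) ℝ)
    (hW : ∀ t, W t = ((List.range N).map (fun s => A (N * t - s))).prod)
    (hrow : ∀ t, 1 ≤ t → ∃ r, ∀ i, α ≤ W t r i)
    (T : ℕ → Matrix (Fin n) (Fin n) ℝ)
    (hT : ∀ k, T k = ((List.range k).map (fun s => A (k - s))).prod) :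
    (∀ k, 1 ≤ k → ergCoeff (T k) ≤ (1 - α) ^ (k / N)) ∧
    (α < 1 → Tendsto (fun k => ergCoeff (T k)) atTop (𝓝 0)) ∧
    (α = 1 → ∀ k, N ≤ k → ergCoeff (T k) = 0) := by
  obtain ⟨hα₀, hα₁⟩ := hα
  have hA {k : ℕ} (hk : 1 ≤ k) : A k ∈ colStochastic ℝ (Fin n) :=
    mem_colStochastic_iff_sum.2 ⟨hnonneg k hk, hcol k hk⟩
  have hWstoch (t : ℕ) : W (t + 1) ∈ colStochastic ℝ (Fin n) := by
    rw [hW]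
    refine Submonoid.list_prod_mem _ ?_
    simp only [List.mem_map, List.mem_range]
    rintro _ ⟨s, hs, rfl⟩
    exact hA (by rw [mul_add]; omega)
  have hTA (k : ℕ) : T (k + 1) = A (k + 1) * T k := by
    rw [hT, hT, add_comm, List.prod_map_range_sub_add]
    simp
  have hTW (t : ℕ) : T (N * (t + 1)) = W (t + 1) * T (N * t) := by
    rw [hT, hT, hW, show N * (t + 1) = N + N * t by ring, List.prod_map_range_sub_add]
  have hbound (k : ℕ) : ergCoeff (T k) ≤ (1 - α) ^ (k / N) :=
    ergCoeff_le (pow_nonneg (by linarith) _) fun j i₁ i₂ =>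
      abs_sub_le_pow_of_blocks hα₁ (fun k => hA k.succ_pos) hWstoch (fun t => hrow _ t.succ_pos)
        (by rw [hT]; exact one_mem _) hTA hTW k j i₁ i₂
  refine ⟨fun k _ => hbound k, fun hlt => ?_, fun hone k hk => ?_⟩
  · exact squeeze_zero (fun k => ergCoeff_nonneg _) hbound
      ((tendsto_pow_atTop_nhds_zero_of_lt_one (by linarith) (by linarith)).comp
        (Nat.tendsto_div_const_atTop (by omega)))
  · refine le_antisymm ?_ (ergCoeff_nonneg _)
    simpa [hone, (Nat.div_pos hk hN).ne'] using hbound k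

/-- Deterministic core of Lemma 1: if each block product
`W_t = A_{Nt} ⋯ A_{N(t−1)+1}` of column-stochastic matrices has a row whose entries
are all ≥ α, then the forward products `T_k = A_k ⋯ A_1` satisfy
`δ(T_k) ≤ (1 − α)^⌊k/N⌋`; in particular `δ(T_k) → 0` when `α < 1`, and
`δ(T_k) = 0` for `k ≥ N` when `α = 1`. -/
theorem stmt_5 (n N : ℕ) (hn : 2 ≤ n) (hN : 1 ≤ N)
    (α : ℝ) (hα : α ∈ Set.Ioc (0 : ℝ) 1)
    (A : ℕ → Matrix (Fin n) (Fin n) ℝ)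
    (hnonneg : ∀ k, 1 ≤ k → ∀ i j, 0 ≤ A k i j)
    (hcol : ∀ k, 1 ≤ k → ∀ j, ∑ i, A k i j = 1)
    (W : ℕ → Matrix (Fin n) (Fin n) ℝ)
    (hW : ∀ t, W t = ((List.range N).map (fun s => A (N * t - s))).prod)
    (hrow : ∀ t, 1 ≤ t → ∃ r, ∀ i, α ≤ W t r i)
    (T : ℕ → Matrix (Fin n) (Fin n) ℝ)
    (hT : ∀ k, T k = ((List.range k).map (fun s => A (k - s))).prod) :
    (∀ k, 1 ≤ k → ergCoeff (T k) ≤ (1 - α) ^ (k / N)) ∧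
    (α < 1 → Tendsto (fun k => ergCoeff (T k)) atTop (𝓝 0)) ∧
    (α = 1 → ∀ k, N ≤ k → ergCoeff (T k) = 0) :=
  stmt_5_general n N hN α hα A hnonneg hcol W hW hrow T hT
end

section
/- Let G = (V, E) be a strongly connected directed graph on V = {1,…,N} with N ≥ 2 (no self-loops; (j,i) ∈ E means node i can send to node j). For k = 1,…,N let A_k be a 2N×2N real matrix with nonnegative entries of the block form A_k = [[P(k), I_N],[Λ(k), 0]], where P(k) is N×N with P(k)_{ii} > 0 for every i and P(k)_{ij} > 0 whenever (i,j) ∈ E, and Λ(k) is diagonal with strictly positive diagonal entries. Then in the product W = A_N · A_{N−1} ⋯ A_1, every entry W_{j,u} with j ∈ {1,…,N} and u ∈ {1,…,2N} is strictly positive; in particular W has at least one row with all entries strictly positive. -/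
/-!
Multiplying a nonnegative matrix on the left by `A_k` can only enlarge the set of actual nodes
whose row is positive in a given column `u`: the positive diagonal of `P(k)` keeps every such node,
and its positive edge entries add every `E`-predecessor. By strong connectivity a nonempty set that
is not everything has a predecessor outside it, so the set grows by one node per factor until it
is all of `V`. The first factor `A_1` already has a positive entry in every column (the diagonal of
`P(1)` or the identity block), and `N - 1` further factors make the whole actual block of column
`u` positive.
-/

open Finset Matrix

theorem Matrix.diagonal_apply_nonneg {n R : Type*} [DecidableEq n] [Zero R] [Preorder R]
    {d : n → R} (hd : ∀ a, 0 ≤ d a) (a b : n) : 0 ≤ diagonal d a b := by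
  rw [diagonal_apply]
  split_ifs
  exacts [hd a, le_rfl]

theorem Matrix.mul_apply_pos {α β γ R : Type*} [Fintype β] [Semiring R] [PartialOrder R]
    [IsStrictOrderedRing R] {M : Matrix α β R} {Q : Matrix β γ R}
    (hM : ∀ a b, 0 ≤ M a b) (hQ : ∀ b c, 0 ≤ Q b c) {a : α} {b : β} {c : γ}
    (hab : 0 < M a b) (hbc : 0 < Q b c) : 0 < (M * Q) a c :=
  sum_pos' (fun x _ => mul_nonneg (hM a x) (hQ x c)) ⟨b, mem_univ b, mul_pos hab hbc⟩

section
variable {R : Type*} [Semiring R] [PartialOrder R] [IsOrderedRing R]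

theorem Matrix.one_apply_nonneg {n : Type*} [DecidableEq n] (a b : n) :
    0 ≤ (1 : Matrix n n R) a b := by
  rw [one_apply]
  split_ifs <;> simp

theorem Matrix.mul_apply_nonneg {α β γ : Type*} [Fintype β] {M : Matrix α β R} {Q : Matrix β γ R}
    (hM : ∀ a b, 0 ≤ M a b) (hQ : ∀ b c, 0 ≤ Q b c) (a : α) (c : γ) : 0 ≤ (M * Q) a c :=
  sum_nonneg fun b _ => mul_nonneg (hM a b) (hQ b c)

theorem Matrix.list_prod_mul_nonneg {ι α : Type*} [Fintype ι] [DecidableEq ι]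
    {L : List (Matrix ι ι R)} (hL : ∀ M ∈ L, ∀ a b, 0 ≤ M a b) {Q : Matrix ι α R}
    (hQ : ∀ a c, 0 ≤ Q a c) : ∀ a c, 0 ≤ (L.prod * Q) a c := by
  induction L with
  | nil => simpa using hQ
  | cons M L ih =>
    rw [List.prod_cons, Matrix.mul_assoc]
    exact mul_apply_nonneg (hL M List.mem_cons_self)
      (ih fun M' hM' => hL M' (List.mem_cons_of_mem M hM'))

end

theorem Finset.eq_univ_of_rel_closed {V : Type*} [Fintype V] {r : V → V → Prop}
    (hr : ∀ i j, i ≠ j → Relation.TransGen r i j) {S : Finset V} (hS : S.Nonempty)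
    (hclosed : ∀ a b, r a b → a ∈ S → b ∈ S) : S = univ := by
  obtain ⟨s, hs⟩ := hS
  have reach : ∀ i, Relation.TransGen r s i → i ∈ S := fun i h => by
    induction h with
    | single h => exact hclosed _ _ h hs
    | tail _ h ih => exact hclosed _ _ h ih
  refine eq_univ_of_forall fun i => ?_
  rcases eq_or_ne s i with rfl | hsi
  exacts [hs, reach i (hr s i hsi)]

theorem Finset.min_card_add_one_le_card_of_reflGen {V : Type*} [Fintype V]
    {r : V → V → Prop} (hr : ∀ i j, i ≠ j → Relation.TransGen r i j) {S T : Finset V}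
    (hS : S.Nonempty) (hST : ∀ a b, Relation.ReflGen r a b → a ∈ S → b ∈ T) :
    min (Fintype.card V) (#S + 1) ≤ #T := by
  have hsub : S ⊆ T := fun a ha => hST a a .refl ha
  by_cases hSuniv : S = univ
  · rw [hSuniv, univ_subset_iff] at hsub
    simp [hsub]
  · obtain ⟨a, b, hab, ha, hb⟩ : ∃ a b, r a b ∧ a ∈ S ∧ b ∉ S := by
      by_contra! h
      exact hSuniv (eq_univ_of_rel_closed hr hS h)
    have hbT : b ∈ T := hST a b (.single hab) ha
    have := card_lt_card (ssubset_iff_subset_ne.mpr ⟨hsub, by rintro rfl; exact hb hbT⟩)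
    omega

section
variable {V κ ι R : Type*} [Semiring R] [LinearOrder R]

def Matrix.colSupport [Fintype V] (Q : Matrix (V ⊕ κ) ι R) (u : ι) : Finset V :=
  {a | 0 < Q (Sum.inl a) u}

structure Matrix.IsPosOnGraph (E : V → V → Prop) (M : Matrix (V ⊕ κ) (V ⊕ κ) R) : Prop where
  nonneg : ∀ x y, 0 ≤ M x y
  diag_pos : ∀ a, 0 < M (Sum.inl a) (Sum.inl a)
  edge_pos : ∀ a b, E a b → 0 < M (Sum.inl a) (Sum.inl b)

@[simp]
theorem Matrix.mem_colSupport [Fintype V] {Q : Matrix (V ⊕ κ) ι R} {u : ι} {a : V} :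
    a ∈ colSupport Q u ↔ 0 < Q (Sum.inl a) u := by
  simp [colSupport]

theorem Matrix.isPosOnGraph_fromBlocks {E : V → V → Prop} {P : Matrix V V R} {B : Matrix V κ R}
    {C : Matrix κ V R} {D : Matrix κ κ R} (hP : ∀ a b, 0 ≤ P a b) (hPdiag : ∀ a, 0 < P a a)
    (hPedge : ∀ a b, E a b → 0 < P a b) (hB : ∀ a c, 0 ≤ B a c) (hC : ∀ c a, 0 ≤ C c a)
    (hD : ∀ c d, 0 ≤ D c d) : IsPosOnGraph E (fromBlocks P B C D) where
  nonneg := by rintro (a | c) (b | d) <;> simp [hP, hB, hC, hD]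
  diag_pos a := by simpa using hPdiag a
  edge_pos a b hab := by simpa using hPedge a b hab

variable [IsStrictOrderedRing R]

theorem Matrix.IsPosOnGraph.mem_colSupport_mul [Fintype V] [Fintype κ] {E : V → V → Prop}
    {M : Matrix (V ⊕ κ) (V ⊕ κ) R} (hM : IsPosOnGraph E M) {Q : Matrix (V ⊕ κ) ι R}
    (hQ : ∀ x c, 0 ≤ Q x c) {u : ι} {a b : V} (hba : Relation.ReflGen (fun a b => E b a) b a)
    (hb : b ∈ colSupport Q u) : a ∈ colSupport (M * Q) u := by
  rw [mem_colSupport] at hb ⊢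
  refine mul_apply_pos hM.nonneg hQ ?_ hb
  cases hba with
  | refl => exact hM.diag_pos a
  | single hab => exact hM.edge_pos a b hab

theorem Matrix.min_card_le_card_colSupport_list_prod_mul [Fintype V] [Fintype κ] [DecidableEq V]
    [DecidableEq κ] {E : V → V → Prop}
    (hE : ∀ i j, i ≠ j → Relation.TransGen (fun a b => E b a) i j)
    {L : List (Matrix (V ⊕ κ) (V ⊕ κ) R)} (hL : ∀ M ∈ L, IsPosOnGraph E M)
    {Q : Matrix (V ⊕ κ) ι R} (hQ : ∀ x c, 0 ≤ Q x c) {u : ι} (hu : (colSupport Q u).Nonempty) :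
    min (Fintype.card V) (#(colSupport Q u) + L.length) ≤ #(colSupport (L.prod * Q) u) := by
  induction L with
  | nil => simp
  | cons M L ih =>
    have hL' : ∀ M' ∈ L, IsPosOnGraph E M' := fun M' hM' => hL M' (List.mem_cons_of_mem M hM')
    have ih := ih hL'
    have hne : (colSupport (L.prod * Q) u).Nonempty := by
      have := hu.card_pos
      have := card_le_univ (colSupport Q u)
      rw [← card_pos]
      omega
    have step := min_card_add_one_le_card_of_reflGen hE hne fun b a hba hb =>
      (hL M List.mem_cons_self).mem_colSupport_mul
        (list_prod_mul_nonneg (fun M' hM' => (hL' M' hM').nonneg) hQ) hba hb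
    rw [List.prod_cons, Matrix.mul_assoc, List.length_cons]
    omega

theorem Matrix.colSupport_list_prod_mul_eq_univ [Fintype V] [Fintype κ] [DecidableEq V]
    [DecidableEq κ] {E : V → V → Prop}
    (hE : ∀ i j, i ≠ j → Relation.TransGen (fun a b => E b a) i j)
    {L : List (Matrix (V ⊕ κ) (V ⊕ κ) R)} (hL : ∀ M ∈ L, IsPosOnGraph E M)
    (hlen : Fintype.card V ≤ L.length + 1)
    {Q : Matrix (V ⊕ κ) ι R} (hQ : ∀ x c, 0 ≤ Q x c) {u : ι} (hu : (colSupport Q u).Nonempty) :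
    colSupport (L.prod * Q) u = univ := by
  have := min_card_le_card_colSupport_list_prod_mul hE hL hQ hu
  have := hu.card_pos
  have := card_le_univ (colSupport (L.prod * Q) u)
  exact eq_univ_of_card _ (by omega)

theorem Matrix.colSupport_fromBlocks_one_nonempty [Fintype V] [DecidableEq V] {P : Matrix V V R}
    (hPdiag : ∀ a, 0 < P a a) (C D : Matrix V V R) (u : V ⊕ V) :
    (colSupport (fromBlocks P 1 C D) u).Nonempty := by
  rcases u with c | c
  · exact ⟨c, by simpa using hPdiag c⟩
  · exact ⟨c, by simp⟩

end

theorem stmt_7_general (N : ℕ)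
    (E : Fin N → Fin N → Prop)
    (hconn : ∀ i j : Fin N, i ≠ j → Relation.TransGen (fun a b => E b a) i j)
    (P : Fin N → Matrix (Fin N) (Fin N) ℝ)
    (Λ : Fin N → Fin N → ℝ)
    (hPnonneg : ∀ k i j, 0 ≤ P k i j)
    (hPdiag : ∀ k i, 0 < P k i i)
    (hPedge : ∀ k i j, E i j → 0 < P k i j)
    (hΛpos : ∀ k i, 0 < Λ k i)
    (A : Fin N → Matrix (Fin N ⊕ Fin N) (Fin N ⊕ Fin N) ℝ)
    (hA : ∀ k, A k = Matrix.fromBlocks (P k) (1 : Matrix (Fin N) (Fin N) ℝ)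
        (Matrix.diagonal (Λ k)) (0 : Matrix (Fin N) (Fin N) ℝ))
    (W : Matrix (Fin N ⊕ Fin N) (Fin N ⊕ Fin N) ℝ)
    (hW : W = ((List.ofFn A).reverse).prod) :
    ∀ (j : Fin N) (u : Fin N ⊕ Fin N), 0 < W (Sum.inl j) u := by
  intro j u
  have hApos k : IsPosOnGraph E (A k) := hA k ▸ isPosOnGraph_fromBlocks (hPnonneg k) (hPdiag k)
    (hPedge k) one_apply_nonneg (diagonal_apply_nonneg fun a => (hΛpos k a).le) (by simp)
  obtain ⟨n, rfl⟩ : ∃ n, N = n + 1 := Nat.exists_eq_add_one.mpr j.pos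
  have hsplit : W = (List.ofFn fun k : Fin n => A k.succ).reverse.prod * A 0 := by
    rw [hW, List.ofFn_succ, List.reverse_cons, List.prod_append, List.prod_singleton]
  have huniv : colSupport W u = univ := hsplit ▸ colSupport_list_prod_mul_eq_univ hconn
    (by simp [hApos]) (by simp) (hApos 0).nonneg
    (hA 0 ▸ colSupport_fromBlocks_one_nonempty (hPdiag 0) _ _ u)
  exact mem_colSupport.mp (by simp [huniv])

/-- Over a strongly connected digraph (edge `(j,i) ∈ E`, i.e. `E j i`, meaning node `i`
can send to node `j`), the product `W = A_N ⋯ A_1` of the nonnegative augmented matrices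
`A_k = [[P(k), I],[Λ(k), 0]]` — where `P(k)` has positive diagonal and positive entries on
all edges, and `Λ(k)` is diagonal with positive diagonal — has every entry `W_{j,u}`
with `j` an actual node (first block) strictly positive; in particular `W` has a row
with all entries strictly positive. -/
theorem stmt_7 (N : ℕ) (hN : 2 ≤ N)
    (E : Fin N → Fin N → Prop)
    (hnoself : ∀ i, ¬ E i i)
    (hconn : ∀ i j : Fin N, i ≠ j → Relation.TransGen (fun a b => E b a) i j)
    (P : Fin N → Matrix (Fin N) (Fin N) ℝ)
    (Λ : Fin N → Fin N → ℝ)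
    (hPnonneg : ∀ k i j, 0 ≤ P k i j)
    (hPdiag : ∀ k i, 0 < P k i i)
    (hPedge : ∀ k i j, E i j → 0 < P k i j)
    (hΛpos : ∀ k i, 0 < Λ k i)
    (A : Fin N → Matrix (Fin N ⊕ Fin N) (Fin N ⊕ Fin N) ℝ)
    (hA : ∀ k, A k = Matrix.fromBlocks (P k) (1 : Matrix (Fin N) (Fin N) ℝ)
        (Matrix.diagonal (Λ k)) (0 : Matrix (Fin N) (Fin N) ℝ))
    (W : Matrix (Fin N ⊕ Fin N) (Fin N ⊕ Fin N) ℝ)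
    (hW : W = ((List.ofFn A).reverse).prod) :
    ∀ (j : Fin N) (u : Fin N ⊕ Fin N), 0 < W (Sum.inl j) u :=
  stmt_7_general N E hconn P Λ hPnonneg hPdiag hPedge hΛpos A hA W hW
end

section
/- Let N ≥ 2 and fix distinct nodes i, m ∈ {1,…,N}. Let p′ : {1,…,N}×{1,…,N} → ℝ be a weight matrix and let x′^α, x′^β : {1,…,N} → ℝ be substate vectors with x′^α_m ≠ 0, and let e ∈ ℝ. Define modified substates x″^α_n = x′^α_n for all n, x″^β_i = x′^β_i + 2e, x″^β_m = x′^β_m − 2e, and x″^β_q = x′^β_q for all q ∉ {i, m}; define modified weights p″_{mm} = (p′_{mm}·x′^α_m + 2e)/x′^α_m, p″_{im} = (p′_{im}·x′^α_m − 2e)/x′^α_m, p″_{qm} = p′_{qm} for q ∉ {i, m}, and p″_{nj} = p′_{nj} for all n and all j ≠ m. Then for every node n ∈ {1,…,N}: Σ_{j=1}^N p″_{nj}·x″^α_j + x″^β_n = Σ_{j=1}^N p′_{nj}·x′^α_j + x′^β_n, and moreover the transmitted values satisfy p″_{qm}·x″^α_m = p′_{qm}·x′^α_m for every q ∉ {i,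 m} and p″_{nj}·x″^α_j = p′_{nj}·x′^α_j for every j ≠ m and every n, while (x″^α_i + x″^β_i)/2 = (x′^α_i + x′^β_i)/2 + e. -/
/-! Only column `m` of the weights and the reserved substates at `i` and `m` change. Since
`x^α_m ≠ 0`, the new weights on column `m` move exactly `+2e` of mass into node `m`'s
incoming sum and `-2e` into node `i`'s, which the changes `-2e` and `+2e` of the reserved
substates cancel; every other transmitted product `p_{nj} x^α_j` is literally unchanged. -/

theorem Fintype.sum_add_eq_sum_add_of_eq_of_ne {ι M : Type*} [Fintype ι] [DecidableEq ι]
    [AddCommMonoid M] {f g : ι → M} {b c : M} (m : ι) (hne : ∀ j, j ≠ m → f j = g j)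
    (hm : f m + b = g m + c) : ∑ j, f j + b = ∑ j, g j + c := by
  rw [← Finset.add_sum_erase _ f (Finset.mem_univ m),
    ← Finset.add_sum_erase _ g (Finset.mem_univ m),
    Finset.sum_congr rfl fun j hj => hne j (Finset.ne_of_mem_erase hj),
    add_right_comm, hm, add_right_comm]

theorem stmt_17_general (N : ℕ) (i m : Fin N)
    (p' : Fin N → Fin N → ℝ) (xα' xβ' : Fin N → ℝ) (hxm : xα' m ≠ 0) (e : ℝ)
    (p'' : Fin N → Fin N → ℝ) (xα'' xβ'' : Fin N → ℝ)
    (hα : ∀ n, xα'' n = xα' n)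
    (hβi : xβ'' i = xβ' i + 2 * e)
    (hβm : xβ'' m = xβ' m - 2 * e)
    (hβq : ∀ q, q ≠ i → q ≠ m → xβ'' q = xβ' q)
    (hpmm : p'' m m = (p' m m * xα' m + 2 * e) / xα' m)
    (hpim : p'' i m = (p' i m * xα' m - 2 * e) / xα' m)
    (hpqm : ∀ q, q ≠ i → q ≠ m → p'' q m = p' q m)
    (hpnj : ∀ n j, j ≠ m → p'' n j = p' n j) :
    (∀ n, ∑ j, p'' n j * xα'' j + xβ'' n = ∑ j, p' n j * xα' j + xβ' n) ∧
    (∀ q, q ≠ i → q ≠ m → p'' q m * xα'' m = p' q m * xα' m) ∧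
    (∀ n j, j ≠ m → p'' n j * xα'' j = p' n j * xα' j) ∧
    (xα'' i + xβ'' i) / 2 = (xα' i + xβ' i) / 2 + e := by
  have hcolumn : ∀ n, p'' n m * xα'' m + xβ'' n = p' n m * xα' m + xβ' n := by
    intro n
    rw [hα]
    rcases eq_or_ne n m with rfl | hnm
    · rw [hpmm, hβm, div_mul_cancel₀ _ hxm]; ring
    rcases eq_or_ne n i with rfl | hni
    · rw [hpim, hβi, div_mul_cancel₀ _ hxm]; ring
    · rw [hpqm n hni hnm, hβq n hni hnm]
  have hoff_column : ∀ n j, j ≠ m → p'' n j * xα'' j = p' n j * xα' j := fun n j hj => by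
    rw [hα, hpnj n j hj]
  exact ⟨fun n => Fintype.sum_add_eq_sum_add_of_eq_of_ne m (hoff_column n) (hcolumn n),
    fun q hqi hqm => by rw [hα, hpqm q hqi hqm], hoff_column, by rw [hα, hβi]; ring⟩

/-- Situation I (m an in-neighbor of i) in the proof of Theorem 2: perturbing node `i`'s
initial value by `e` (via its reserved substate) while compensating at node `m` and
rescaling the weights on column `m` leaves all step-1 exchanged substates
`Σ_j p_{nj} x^α_j + x^β_n` and all transmitted values visible to other nodes unchanged,
while the initial value of node `i` changes by exactly `e`. -/
theorem stmt_17 (N : ℕ) (hN : 2 ≤ N) (i m : Fin N) (him : i ≠ m)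
    (p' : Fin N → Fin N → ℝ) (xα' xβ' : Fin N → ℝ) (hxm : xα' m ≠ 0) (e : ℝ)
    (p'' : Fin N → Fin N → ℝ) (xα'' xβ'' : Fin N → ℝ)
    (hα : ∀ n, xα'' n = xα' n)
    (hβi : xβ'' i = xβ' i + 2 * e)
    (hβm : xβ'' m = xβ' m - 2 * e)
    (hβq : ∀ q, q ≠ i → q ≠ m → xβ'' q = xβ' q)
    (hpmm : p'' m m = (p' m m * xα' m + 2 * e) / xα' m)
    (hpim : p'' i m = (p' i m * xα' m - 2 * e) / xα' m)
    (hpqm : ∀ q, q ≠ i → q ≠ m → p'' q m = p' q m)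
    (hpnj : ∀ n j, j ≠ m → p'' n j = p' n j) :
    (∀ n, ∑ j, p'' n j * xα'' j + xβ'' n = ∑ j, p' n j * xα' j + xβ' n) ∧
    (∀ q, q ≠ i → q ≠ m → p'' q m * xα'' m = p' q m * xα' m) ∧
    (∀ n j, j ≠ m → p'' n j * xα'' j = p' n j * xα' j) ∧
    (xα'' i + xβ'' i) / 2 = (xα' i + xβ' i) / 2 + e :=
  stmt_17_general N i m p' xα' xβ' hxm e p'' xα'' xβ'' hα hβi hβm hβq hpmm hpim hpqm hpnj
end

section
/- Let N ≥ 2 and fix distinct nodes i, m ∈ {1,…,N}. Let p′ : {1,…,N}×{1,…,N} → ℝ be a weight matrix and let x′^α, x′^β : {1,…,N} → ℝ be substate vectors with x′^α_i ≠ 0, and let e ∈ ℝ. Define modified substates x″^α_n = x′^α_n for all n, x″^β_i = x′^β_i + 2e, x″^β_m = x′^β_m − 2e, and x″^β_q = x′^β_q for all q ∉ {i, m}; define modified weights p″_{ii} = (p′_{ii}·x′^α_i − 2e)/x′^α_i, p″_{mi} = (p′_{mi}·x′^α_i + 2e)/x′^α_i, p″_{qi} = p′_{qi} for q ∉ {i,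 m}, and p″_{nj} = p′_{nj} for all n and all j ≠ i. Then for every node n ∈ {1,…,N}: Σ_{j=1}^N p″_{nj}·x″^α_j + x″^β_n = Σ_{j=1}^N p′_{nj}·x′^α_j + x′^β_n, and moreover p″_{qi}·x″^α_i = p′_{qi}·x′^α_i for every q ∉ {i, m} and p″_{nj}·x″^α_j = p′_{nj}·x′^α_j for every j ≠ i and every n, while (x″^α_i + x″^β_i)/2 = (x′^α_i + x′^β_i)/2 + e. -/
open Finset

/-!
Only column `i` of the weights changes, and only by amounts that, once multiplied by `x^α_i`,
move `2e` out of node `i`'s update and into node `m`'s. The reserved substates are shifted by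
exactly the opposite amounts, so every step-1 exchanged substate is unchanged, whereas node `i`'s
initial value `(x^α_i + x^β_i)/2` grows by `e`.
-/

theorem Fintype.sum_eq_sum_add_sub_of_eq_of_ne {ι M : Type*} [Fintype ι] [AddCommGroup M]
    {f g : ι → M} (i : ι) (h : ∀ j, j ≠ i → f j = g j) :
    ∑ j, f j = ∑ j, g j + (f i - g i) := by
  have hdiff : ∑ j, (f j - g j) = f i - g i :=
    Fintype.sum_eq_single i fun j hj => sub_eq_zero.2 (h j hj)
  rw [← hdiff, sum_sub_distrib, add_sub_cancel]

theorem sum_mul_add_eq_of_column_compensation {ι : Type*} [Fintype ι] (i : ι)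
    (p' p'' : ι → ι → ℝ) (xα xβ' xβ'' : ι → ℝ) (hp : ∀ n j, j ≠ i → p'' n j = p' n j)
    (hcomp : ∀ n, p'' n i * xα i + xβ'' n = p' n i * xα i + xβ' n) (n : ι) :
    ∑ j, p'' n j * xα j + xβ'' n = ∑ j, p' n j * xα j + xβ' n := by
  rw [Fintype.sum_eq_sum_add_sub_of_eq_of_ne i fun j hj => by rw [hp n j hj]]
  linarith [hcomp n]

theorem stmt_18_general (N : ℕ) (i m : Fin N)
    (p' : Fin N → Fin N → ℝ) (xα' xβ' : Fin N → ℝ) (hxi : xα' i ≠ 0) (e : ℝ)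
    (p'' : Fin N → Fin N → ℝ) (xα'' xβ'' : Fin N → ℝ)
    (hα : ∀ n, xα'' n = xα' n)
    (hβi : xβ'' i = xβ' i + 2 * e)
    (hβm : xβ'' m = xβ' m - 2 * e)
    (hβq : ∀ q, q ≠ i → q ≠ m → xβ'' q = xβ' q)
    (hpii : p'' i i = (p' i i * xα' i - 2 * e) / xα' i)
    (hpmi : p'' m i = (p' m i * xα' i + 2 * e) / xα' i)
    (hpqi : ∀ q, q ≠ i → q ≠ m → p'' q i = p' q i)
    (hpnj : ∀ n j, j ≠ i → p'' n j = p' n j) :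
    (∀ n, ∑ j, p'' n j * xα'' j + xβ'' n = ∑ j, p' n j * xα' j + xβ' n) ∧
    (∀ q, q ≠ i → q ≠ m → p'' q i * xα'' i = p' q i * xα' i) ∧
    (∀ n j, j ≠ i → p'' n j * xα'' j = p' n j * xα' j) ∧
    (xα'' i + xβ'' i) / 2 = (xα' i + xβ' i) / 2 + e := by
  have hα' : xα'' = xα' := funext hα
  subst hα'
  have hcomp : ∀ n, p'' n i * xα'' i + xβ'' n = p' n i * xα'' i + xβ' n := by
    intro n
    rcases eq_or_ne n i with rfl | hni
    · rw [hpii, hβi, div_mul_cancel₀ _ hxi]; ring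
    rcases eq_or_ne n m with rfl | hnm
    · rw [hpmi, hβm, div_mul_cancel₀ _ hxi]; ring
    · rw [hpqi n hni hnm, hβq n hni hnm]
  refine ⟨sum_mul_add_eq_of_column_compensation i p' p'' xα'' xβ' xβ'' hpnj hcomp,
    fun q hqi hqm => by rw [hpqi q hqi hqm], fun n j hj => by rw [hpnj n j hj], ?_⟩
  rw [hβi]; ring

/-- Situation II (m an out-neighbor of i) in the proof of Theorem 2: perturbing node `i`'s
initial value by `e` (via its reserved substate) while compensating at node `m` and
rescaling the weights on column `i` leaves all step-1 exchanged substates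
`Σ_j p_{nj} x^α_j + x^β_n` and all transmitted values visible to other nodes unchanged,
while the initial value of node `i` changes by exactly `e`. -/
theorem stmt_18 (N : ℕ) (hN : 2 ≤ N) (i m : Fin N) (him : i ≠ m)
    (p' : Fin N → Fin N → ℝ) (xα' xβ' : Fin N → ℝ) (hxi : xα' i ≠ 0) (e : ℝ)
    (p'' : Fin N → Fin N → ℝ) (xα'' xβ'' : Fin N → ℝ)
    (hα : ∀ n, xα'' n = xα' n)
    (hβi : xβ'' i = xβ' i + 2 * e)
    (hβm : xβ'' m = xβ' m - 2 * e)
    (hβq : ∀ q, q ≠ i → q ≠ m → xβ'' q = xβ' q)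
    (hpii : p'' i i = (p' i i * xα' i - 2 * e) / xα' i)
    (hpmi : p'' m i = (p' m i * xα' i + 2 * e) / xα' i)
    (hpqi : ∀ q, q ≠ i → q ≠ m → p'' q i = p' q i)
    (hpnj : ∀ n j, j ≠ i → p'' n j = p' n j) :
    (∀ n, ∑ j, p'' n j * xα'' j + xβ'' n = ∑ j, p' n j * xα' j + xβ' n) ∧
    (∀ q, q ≠ i → q ≠ m → p'' q i * xα'' i = p' q i * xα' i) ∧
    (∀ n j, j ≠ i → p'' n j * xα'' j = p' n j * xα' j) ∧
    (xα'' i + xβ'' i) / 2 = (xα' i + xβ' i) / 2 + e :=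
  stmt_18_general N i m p' xα' xβ' hxi e p'' xα'' xβ'' hα hβi hβm hβq hpii hpmi hpqi hpnj
end
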